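/- Let L_MAJ = {x ∈ {0,1}* : x has more 1's than 0's, or x has an equal number of 0's and 1's and x begins with 1}. Then L_MAJ is not strongly counting-regular: there exists a regular language R ⊆ {0,1}* such that L_MAJ ∩ R is not counting-regular. -/

import Mathlib

/-!
Take `R = 1{0,1}*`. A word `1v` of length `2k + 1` lies in `L_MAJ` iff `v` has at most `k` zeros,
so by the symmetry of binomial coefficients `2 f(2k + 1) = 4 ^ k + C(2k, k)`. The counting function
of a regular language is eventually periodic modulo `3`: the vector of counts from each DFA state
evolves under a fixed map of a finite set. Hence `C(2k, k) mod 3` would be eventually periodic; but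
by Lucas it is `2` at `k = 3 ^ m`, and by Kummer it vanishes on the whole of `[2 * 3 ^ m, 3 ^ (m + 1))`.
-/

/-- The counting function of a language: the number of words of length `n`. -/
noncomputable def countFn {α : Type*} (L : Set (List α)) (n : ℕ) : ℕ :=
  Set.ncard {w | w ∈ L ∧ w.length = n}

/-- A language is regular if it is accepted by a DFA with finitely many states. -/
def IsRegularLang {α : Type*} (L : Set (List α)) : Prop :=
  ∃ (σ : Type) (_ : Fintype σ) (M : DFA α σ), ∀ w, w ∈ M.accepts ↔ w ∈ L

/-- A language is counting-regular if some regular language over a (possibly different)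
finite alphabet has the same counting function. -/
def CountingRegular {α : Type*} (L : Set (List α)) : Prop :=
  ∃ (β : Type) (_ : Fintype β) (L' : Set (List β)),
    IsRegularLang L' ∧ ∀ n, countFn L' n = countFn L n


/-- `L_MAJ`: words over `{0,1}` with more 1's than 0's, or equally many and starting with 1. -/
def LMAJ : Set (List (Fin 2)) :=
  {x | x.count 0 < x.count 1 ∨ (x.count 0 = x.count 1 ∧ x.head? = some 1)}

open Filter Finset

def EventuallyPeriodic {α : Type*} (u : ℕ → α) : Prop :=
  ∃ p > 0, ∀ᶠ n in atTop, u (n + p) = u n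

namespace EventuallyPeriodic

variable {α β : Type*} {u : ℕ → α}

theorem comp (hu : EventuallyPeriodic u) (g : α → β) : EventuallyPeriodic (g ∘ u) := by
  obtain ⟨p, hp, h⟩ := hu
  exact ⟨p, hp, h.mono fun n hn => by simp [hn]⟩

theorem eventually_add_mul_eq {p : ℕ} (h : ∀ᶠ n in atTop, u (n + p) = u n) :
    ∀ᶠ n in atTop, ∀ j, u (n + j * p) = u n := by
  obtain ⟨N, hN⟩ := eventually_atTop.mp h
  refine eventually_atTop.mpr ⟨N, fun n hn j => ?_⟩
  induction j with
  | zero => simp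
  | succ j ih => rw [add_mul, one_mul, ← add_assoc, hN _ (by omega), ih]

theorem comp_mul_add (hu : EventuallyPeriodic u) {a : ℕ} (ha : 0 < a) (b : ℕ) :
    EventuallyPeriodic fun k => u (a * k + b) := by
  obtain ⟨p, hp, h⟩ := hu
  obtain ⟨N, hN⟩ := eventually_atTop.mp (eventually_add_mul_eq h)
  refine ⟨p, hp, eventually_atTop.mpr ⟨N, fun k hk => ?_⟩⟩
  dsimp only
  rw [show a * (k + p) + b = a * k + b + a * p by ring, hN _ (by nlinarith)]

end EventuallyPeriodic

theorem Function.eventuallyPeriodic_iterate {α : Type*} [Finite α] (f : α → α) (x : α) :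
    EventuallyPeriodic fun n => f^[n] x := by
  obtain ⟨i, j, hij, heq⟩ := Set.finite_univ.exists_lt_map_eq_of_forall_mem
    (f := fun n : ℕ => f^[n] x) fun _ => Set.mem_univ _
  refine ⟨j - i, by omega, eventually_atTop.mpr ⟨i, fun n hn => ?_⟩⟩
  obtain ⟨m, rfl⟩ := Nat.exists_eq_add_of_le hn
  dsimp only
  rw [show i + m + (j - i) = m + j by omega, Function.iterate_add_apply, ← heq,
    ← Function.iterate_add_apply, add_comm]

namespace Nat

theorem centralBinom_three_pow_modEq (m : ℕ) : centralBinom (3 ^ m) ≡ 2 [MOD 3] := by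
  induction m with
  | zero => rfl
  | succ m ih =>
    rw [centralBinom_eq_two_mul_choose] at ih ⊢
    rw [pow_succ', mul_left_comm]
    exact Choose.choose_mul_mul_modEq_choose_nat.trans ih

theorem three_dvd_centralBinom {m k : ℕ} (h₁ : 2 * 3 ^ m ≤ k) (h₂ : k < 3 ^ (m + 1)) :
    3 ∣ centralBinom k := by
  have hlog : log 3 (k + k) < m + 2 :=
    log_lt_of_lt_pow (by omega) (by rw [pow_succ]; omega)
  apply dvd_of_one_le_padicValNat
  rw [centralBinom_eq_two_mul_choose, two_mul, padicValNat_choose' hlog, one_le_card]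
  -- adding `k` to itself in base 3 carries out of the digit of weight `3 ^ m`
  refine ⟨m + 1, ?_⟩
  simp only [mem_filter, mem_Ico, mod_eq_of_lt h₂]
  exact ⟨by omega, by rw [pow_succ]; omega⟩

theorem not_eventuallyPeriodic_centralBinom_cast :
    ¬ EventuallyPeriodic fun k => (centralBinom k : ZMod 3) := by
  rintro ⟨p, hp, h⟩
  obtain ⟨N, hN⟩ := eventually_atTop.mp
    (EventuallyPeriodic.eventually_add_mul_eq (u := fun k => (centralBinom k : ZMod 3)) h)
  obtain ⟨m, hNm, hpm⟩ : ∃ m, N ≤ 3 ^ m ∧ p < 3 ^ m :=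
    ⟨N + p, by have := Nat.lt_pow_self (n := N + p) (a := 3) (by norm_num); omega⟩
  -- the progression `3 ^ m + j * p` has step `p < 3 ^ m`, so it meets `[2 * 3 ^ m, 3 ^ (m + 1))`
  set j := 3 ^ m / p + 1
  have hj : 3 ^ m < j * p ∧ j * p < 2 * 3 ^ m := by
    have : j * p = p * (3 ^ m / p) + p := by ring
    have := div_add_mod (3 ^ m) p
    have := mod_lt (3 ^ m) hp
    omega
  have hzero := three_dvd_centralBinom (m := m) (k := 3 ^ m + j * p) (by omega)
    (by rw [pow_succ]; omega)
  have key := hN (3 ^ m) hNm j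
  rw [(ZMod.natCast_eq_zero_iff _ _).mpr hzero,
    (ZMod.natCast_eq_natCast_iff _ _ _).mpr (centralBinom_three_pow_modEq m)] at key
  exact absurd key (by decide)

theorem two_mul_sum_range_choose_halfway (k : ℕ) :
    2 * ∑ i ∈ range (k + 1), (2 * k).choose i = 4 ^ k + centralBinom k := by
  have hreflect :
      ∑ i ∈ range (k + 1), (2 * k).choose i = ∑ i ∈ Ico k (2 * k + 1), (2 * k).choose i := by
    calc ∑ i ∈ range (k + 1), (2 * k).choose i
        = ∑ i ∈ Ico 0 (k + 1), (2 * k).choose (2 * k - i) := by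
          rw [range_eq_Ico]
          exact sum_congr rfl fun i hi => (choose_symm (by simp at hi; omega)).symm
      _ = ∑ i ∈ Ico k (2 * k + 1), (2 * k).choose i := by
          rw [sum_Ico_reflect _ _ (by omega), show 2 * k + 1 - (k + 1) = k by omega, Nat.sub_zero]
  calc 2 * ∑ i ∈ range (k + 1), (2 * k).choose i
      = ∑ i ∈ range k, (2 * k).choose i + (2 * k).choose k
          + ∑ i ∈ Ico k (2 * k + 1), (2 * k).choose i := by
        rw [two_mul]
        nth_rewrite 2 [hreflect]
        rw [sum_range_succ]
    _ = ∑ i ∈ range (2 * k + 1), (2 * k).choose i + (2 * k).choose k := by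
        rw [add_right_comm, sum_range_add_sum_Ico _ (by omega)]
    _ = 4 ^ k + centralBinom k := by
        rw [sum_range_choose, pow_mul, centralBinom_eq_two_mul_choose]
        norm_num

end Nat

section countFn

variable {α : Type*}

open Classical in
theorem countFn_zero (L : Set (List α)) : countFn L 0 = if [] ∈ L then 1 else 0 := by
  split_ifs with h
  · rw [countFn, Set.ncard_eq_one]
    exact ⟨[], by ext w; simp +contextual [List.length_eq_zero_iff, h]⟩
  · simp [countFn, List.length_eq_zero_iff, Set.ofPred_and, h]

theorem countFn_succ [Fintype α] (L : Set (List α)) (n : ℕ) :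
    countFn L (n + 1) = ∑ a, countFn {w | a :: w ∈ L} n := by
  have hsplit : {w | w ∈ L ∧ w.length = n + 1} =
      ⋃ a, List.cons a '' {w | w ∈ {w | a :: w ∈ L} ∧ w.length = n} := by
    ext (_ | ⟨a, w⟩) <;> simp
  have hfin (a : α) : {w | w ∈ {w | a :: w ∈ L} ∧ w.length = n}.Finite :=
    (List.finite_length_eq α n).subset fun _ hw => hw.2
  rw [countFn, hsplit, Set.ncard_iUnion_of_finite (fun a => (hfin a).image _),
    finsum_eq_sum_of_fintype]
  · simp only [Set.ncard_image_of_injective _ List.cons_injective, countFn]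
  · intro a b hab
    simp only [Function.onFun, Set.disjoint_left]
    rintro _ ⟨w, -, rfl⟩ ⟨v, -, hv⟩
    exact hab (List.cons_eq_cons.mp hv).1.symm

theorem countFn_union [Finite α] {L L' : Set (List α)} (h : Disjoint L L') (n : ℕ) :
    countFn (L ∪ L') n = countFn L n + countFn L' n := by
  rw [countFn, countFn, countFn, ← Set.ncard_union_eq _ ((List.finite_length_eq α n).subset _)
    ((List.finite_length_eq α n).subset _)]
  · congr 1; ext; simp [or_and_right]
  · exact Set.disjoint_of_subset (fun _ hw => hw.1) (fun _ hw => hw.1) h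
  · exact fun _ hw => hw.2
  · exact fun _ hw => hw.2

theorem IsRegularLang.eventuallyPeriodic_countFn_cast [Fintype α] {L : Set (List α)}
    (hL : IsRegularLang L) (S : Type*) [AddCommMonoidWithOne S] [Finite S] :
    EventuallyPeriodic fun n => (countFn L n : S) := by
  obtain ⟨σ, _, M, hM⟩ := hL
  let v (n : ℕ) (q : σ) : S := countFn {w | M.evalFrom q w ∈ M.accept} n
  let T (φ : σ → S) (q : σ) : S := ∑ a, φ (M.step q a)
  have hv (n : ℕ) : v n = T^[n] (v 0) := by
    induction n with
    | zero => rfl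
    | succ n ih =>
      rw [Function.iterate_succ_apply', ← ih]
      funext q
      simp only [v, T]
      rw [countFn_succ, Nat.cast_sum]
      rfl
  have hML : {w | M.eval w ∈ M.accept} = L := Set.ext hM
  convert (Function.eventuallyPeriodic_iterate T (v 0)).comp (fun φ => φ M.start) using 2 with n
  rw [Function.comp_apply, ← hv, ← hML]
  rfl

end countFn

theorem List.count_zero_add_count_one (w : List (Fin 2)) : w.count 0 + w.count 1 = w.length := by
  induction w with
  | nil => rfl
  | cons a w ih => fin_cases a <;> simp <;> omega

theorem countFn_count_zero_eq (n j : ℕ) :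
    countFn {w : List (Fin 2) | w.count 0 = j} n = n.choose j := by
  induction n generalizing j with
  | zero => rw [countFn_zero]; cases j <;> simp
  | succ n ih =>
    rw [countFn_succ, Fin.sum_univ_two]
    simp only [Set.mem_ofPred_eq, List.count_cons_self,
      List.count_cons_of_ne (by decide : (1 : Fin 2) ≠ 0)]
    cases j with
    | zero => simpa [countFn] using ih 0
    | succ j => simp [ih, Nat.choose_succ_succ']

theorem countFn_count_zero_le (n k : ℕ) :
    countFn {w : List (Fin 2) | w.count 0 ≤ k} n = ∑ j ∈ range (k + 1), n.choose j := by
  induction k with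
  | zero => simp [← countFn_count_zero_eq]
  | succ k ih =>
    have hsplit : {w : List (Fin 2) | w.count 0 ≤ k + 1} =
        {w | w.count 0 ≤ k} ∪ {w | w.count 0 = k + 1} := by
      ext; simp [Nat.le_succ_iff]
    rw [hsplit, countFn_union, ih, countFn_count_zero_eq, sum_range_succ _ (k + 1)]
    exact Set.disjoint_left.mpr fun w h₁ h₂ => by simp_all

def startsWithOne : Set (List (Fin 2)) := {w | w.head? = some 1}

def startsWithOneDFA : DFA (Fin 2) (Option Bool) where
  step q a := some (q.getD (a = 1))
  start := none
  accept := {some true}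

theorem startsWithOneDFA_evalFrom_some (b : Bool) (w : List (Fin 2)) :
    startsWithOneDFA.evalFrom (some b) w = some b := by
  induction w with
  | nil => rfl
  | cons a w ih => exact ih

theorem isRegularLang_startsWithOne : IsRegularLang startsWithOne := by
  refine ⟨Option Bool, inferInstance, startsWithOneDFA, fun w => ?_⟩
  cases w with
  | nil => simp [DFA.mem_accepts, startsWithOneDFA, startsWithOne]
  | cons a w =>
    change startsWithOneDFA.evalFrom (some (a = 1)) w ∈ ({some true} : Set (Option Bool)) ↔ _
    simp [startsWithOneDFA_evalFrom_some, startsWithOne]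

theorem countFn_LMAJ_inter_startsWithOne (k : ℕ) :
    countFn (LMAJ ∩ startsWithOne) (2 * k + 1) =
      countFn {w : List (Fin 2) | w.count 0 ≤ k} (2 * k) := by
  have hset : {w | w ∈ LMAJ ∩ startsWithOne ∧ w.length = 2 * k + 1} =
      List.cons 1 '' {w | w ∈ {w : List (Fin 2) | w.count 0 ≤ k} ∧ w.length = 2 * k} := by
    ext (_ | ⟨a, w⟩)
    · simp [startsWithOne]
    · have := w.count_zero_add_count_one
      fin_cases a <;> simp [LMAJ, startsWithOne]; omega
  rw [countFn, hset, Set.ncard_image_of_injective _ List.cons_injective, countFn]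

theorem two_mul_countFn_LMAJ_inter_startsWithOne (k : ℕ) :
    2 * countFn (LMAJ ∩ startsWithOne) (2 * k + 1) = 4 ^ k + Nat.centralBinom k := by
  rw [countFn_LMAJ_inter_startsWithOne, countFn_count_zero_le, Nat.two_mul_sum_range_choose_halfway]

/-- `L_MAJ` is not strongly counting-regular: some regular language `R` makes
`L_MAJ ∩ R` not counting-regular. -/
theorem stmt5 :
    ∃ R : Set (List (Fin 2)), IsRegularLang R ∧ ¬ CountingRegular (LMAJ ∩ R) := by
  refine ⟨startsWithOne, isRegularLang_startsWithOne, ?_⟩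
  rintro ⟨β, _, L', hL', hcount⟩
  apply Nat.not_eventuallyPeriodic_centralBinom_cast
  have hper := (hL'.eventuallyPeriodic_countFn_cast (ZMod 3)).comp_mul_add two_pos 1
  convert hper.comp (fun x => 2 * x - 1) using 1
  funext k
  have h := congrArg (Nat.cast : ℕ → ZMod 3) (two_mul_countFn_LMAJ_inter_startsWithOne k)
  push_cast at h
  rw [show (4 : ZMod 3) = 1 by decide, one_pow] at h
  simp only [Function.comp_apply, hcount, h]
  ring
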